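/- Let ρ_f, ρ_g : [0,1] → ℝ with a_ℓ ≤ ρ_f, ρ_g and |ρ_f − ρ_g| ≤ D pointwise. Then for 0 ≤ y ≤ x ≤ 1 and v₁ ≠ 0, |exp(−(τ|v₁|)⁻¹∫_y^x ρ_f(z)dz) − exp(−(τ|v₁|)⁻¹∫_y^x ρ_g(z)dz)| ≤ (2/(e·a_ℓ)) · exp(−a_ℓ(x−y)/(2τ|v₁|)) · D. -/
import Mathlib


open MeasureTheory

private lemma exp_diff_aux (c M δ A B : ℝ) (hc : 0 ≤ c) (hA : M ≤ A) (hB : M ≤ B)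
    (hAB : |A - B| ≤ δ) :
    |Real.exp (-c * A) - Real.exp (-c * B)| ≤ Real.exp (-c * M) * (c * δ) := by
  wlog h : A ≤ B generalizing A B
  · rw [abs_sub_comm] at hAB ⊢
    exact this B A hB hA hAB (le_of_not_ge h)
  have h1 : Real.exp (-c * B) ≤ Real.exp (-c * A) := by
    apply Real.exp_le_exp.mpr; nlinarith
  rw [abs_of_nonneg (by linarith)]
  have h2 : Real.exp (-c * A) - Real.exp (-c * B)
      = Real.exp (-c * A) * (1 - Real.exp (-(c * (B - A)))) := by
    rw [mul_sub, mul_one, ← Real.exp_add]; ring_nf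
  rw [h2]
  have h3 : 1 - Real.exp (-(c * (B - A))) ≤ c * (B - A) := by
    have := Real.add_one_le_exp (-(c * (B - A)))
    linarith
  have h4 : Real.exp (-c * A) ≤ Real.exp (-c * M) := by
    apply Real.exp_le_exp.mpr; nlinarith
  have h5 : c * (B - A) ≤ c * δ := by
    rw [abs_of_nonpos (by linarith)] at hAB
    nlinarith
  have h6 : 0 ≤ 1 - Real.exp (-(c * (B - A))) := by
    have : Real.exp (-(c * (B - A))) ≤ Real.exp 0 := by
      apply Real.exp_le_exp.mpr; nlinarith
    simpa using this
  calc Real.exp (-c * A) * (1 - Real.exp (-(c * (B - A))))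
      ≤ Real.exp (-c * M) * (1 - Real.exp (-(c * (B - A)))) :=
        mul_le_mul_of_nonneg_right h4 h6
    _ ≤ Real.exp (-c * M) * (c * δ) :=
        mul_le_mul_of_nonneg_left (le_trans h3 h5) (Real.exp_pos _).le

private lemma s_exp_aux (s : ℝ) (hs : 0 ≤ s) :
    s * Real.exp (-s) ≤ (2 / Real.exp 1) * Real.exp (-s / 2) := by
  have key : (s / 2) * Real.exp (-(s / 2)) ≤ Real.exp (-1) := by
    have h := Real.add_one_le_exp (s / 2 - 1)
    have h2 : s / 2 ≤ Real.exp (s / 2 - 1) := by linarith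
    have h3 : (s / 2) * Real.exp (-(s / 2)) ≤ Real.exp (s / 2 - 1) * Real.exp (-(s / 2)) :=
      mul_le_mul_of_nonneg_right h2 (Real.exp_pos _).le
    rw [← Real.exp_add] at h3
    convert h3 using 2
    ring
  have hexp : Real.exp (-s) = Real.exp (-(s/2)) * Real.exp (-(s/2)) := by
    rw [← Real.exp_add]; ring_nf
  have hr : Real.exp (-1) = 1 / Real.exp 1 := by
    rw [Real.exp_neg]; ring
  calc s * Real.exp (-s) = 2 * ((s/2) * Real.exp (-(s/2))) * Real.exp (-(s/2)) := by
        rw [hexp]; ring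
    _ ≤ 2 * Real.exp (-1) * Real.exp (-(s/2)) := by
        apply mul_le_mul_of_nonneg_right _ (Real.exp_pos _).le
        exact mul_le_mul_of_nonneg_left key (by norm_num)
    _ = (2 / Real.exp 1) * Real.exp (-s / 2) := by
        rw [hr]; ring_nf

theorem exponential_density_difference_bound_interior
    (aℓ τ D : ℝ) (haℓ : 0 < aℓ) (hτ : 0 < τ) (ρf ρg : ℝ → ℝ)
    (hmf : Measurable ρf) (hmg : Measurable ρg)
    (hf : ∀ z ∈ Set.Icc (0 : ℝ) 1, aℓ ≤ ρf z) (hg : ∀ z ∈ Set.Icc (0 : ℝ) 1, aℓ ≤ ρg z)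
    (hD : ∀ z ∈ Set.Icc (0 : ℝ) 1, |ρf z - ρg z| ≤ D)
    (x y : ℝ) (hy : 0 ≤ y) (hyx : y ≤ x) (hx : x ≤ 1) (v₁ : ℝ) (hv : v₁ ≠ 0)
    (hif : IntervalIntegrable ρf volume y x)
    (hig : IntervalIntegrable ρg volume y x) :
    |Real.exp (-(τ * |v₁|)⁻¹ * ∫ z in y..x, ρf z)
        - Real.exp (-(τ * |v₁|)⁻¹ * ∫ z in y..x, ρg z)|
      ≤ (2 / (Real.exp 1 * aℓ)) * Real.exp (-aℓ * (x - y) / (2 * τ * |v₁|)) * D := by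
  have hv' : 0 < |v₁| := abs_pos.mpr hv
  have hτv : 0 < τ * |v₁| := mul_pos hτ hv'
  set c : ℝ := (τ * |v₁|)⁻¹ with hc
  have hc0 : 0 < c := inv_pos.mpr hτv
  have hsub : Set.Icc y x ⊆ Set.Icc (0:ℝ) 1 := Set.Icc_subset_Icc hy hx
  have hD0 : 0 ≤ D := le_trans (abs_nonneg _) (hD 0 (by constructor <;> norm_num))
  -- lower bounds on integrals
  have hconst : IntervalIntegrable (fun _ : ℝ => aℓ) volume y x := intervalIntegrable_const
  have hA : aℓ * (x - y) ≤ ∫ z in y..x, ρf z := by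
    have := intervalIntegral.integral_mono_on hyx hconst hif (fun z hz => hf z (hsub hz))
    simpa [mul_comm] using this
  have hB : aℓ * (x - y) ≤ ∫ z in y..x, ρg z := by
    have := intervalIntegral.integral_mono_on hyx hconst hig (fun z hz => hg z (hsub hz))
    simpa [mul_comm] using this
  -- difference bound
  have hdiff : |(∫ z in y..x, ρf z) - ∫ z in y..x, ρg z| ≤ D * (x - y) := by
    rw [← intervalIntegral.integral_sub hif hig]
    have := intervalIntegral.norm_integral_le_of_norm_le_const
      (f := fun z => ρf z - ρg z) (C := D) (a := y) (b := x) ?_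
    · simpa [abs_of_nonneg (sub_nonneg.mpr hyx)] using this
    · intro z hz
      rw [Set.uIoc_of_le hyx] at hz
      exact hD z (hsub ⟨hz.1.le, hz.2⟩)
  have h1 := exp_diff_aux c (aℓ * (x - y)) (D * (x - y)) _ _ hc0.le hA hB hdiff
  have hs : 0 ≤ c * aℓ * (x - y) := mul_nonneg (mul_nonneg hc0.le haℓ.le) (sub_nonneg.mpr hyx)
  have h2 := s_exp_aux (c * aℓ * (x - y)) hs
  have hfinal : Real.exp (-c * (aℓ * (x - y))) * (c * (D * (x - y)))
      ≤ (2 / (Real.exp 1 * aℓ)) * Real.exp (-aℓ * (x - y) / (2 * τ * |v₁|)) * D := by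
    have he1 : Real.exp (-c * (aℓ * (x - y))) = Real.exp (-(c * aℓ * (x - y))) := by
      ring_nf
    have he2 : Real.exp (-aℓ * (x - y) / (2 * τ * |v₁|))
        = Real.exp (-(c * aℓ * (x - y)) / 2) := by
      congr 1
      rw [hc]
      field_simp
      try exact Or.inl trivial
    rw [he1, he2]
    have key : c * aℓ * (x - y) * Real.exp (-(c * aℓ * (x - y)))
        ≤ (2 / Real.exp 1) * Real.exp (-(c * aℓ * (x - y)) / 2) := h2
    have haℓ' : (0:ℝ) < aℓ := haℓ
    calc Real.exp (-(c * aℓ * (x - y))) * (c * (D * (x - y)))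
        = (c * aℓ * (x - y) * Real.exp (-(c * aℓ * (x - y)))) * (D / aℓ) := by
          field_simp
      _ ≤ ((2 / Real.exp 1) * Real.exp (-(c * aℓ * (x - y)) / 2)) * (D / aℓ) := by
          apply mul_le_mul_of_nonneg_right key (by positivity)
      _ = (2 / (Real.exp 1 * aℓ)) * Real.exp (-(c * aℓ * (x - y)) / 2) * D := by
          field_simp
          try ring
  exact le_trans h1 hfinal
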